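/- Let ξ₁,…,ξₙ be independent mean-zero random vectors in ℝ^d with finite fourth moments, W := Σ_{u=1}^n ξ_u, Σ_W := Var(W), and for each i set W^{(i)} := W − ξᵢ. Then Σ_{i=1}^n E[|ξᵢ · W^{(i)}|³] ≤ ‖Σ_W‖_{H.S.} Σ_{i=1}^n E[|ξᵢ|⁴] + √3 Σ_{i=1}^n E[(ξᵢᵀ Σ_W ξᵢ)^{3/2}]. -/

import Mathlib

open MeasureTheory ProbabilityTheory Real Matrix Filter
open scoped ENNReal NNReal Topology RealInnerProductSpace

noncomputable section

namespace Paper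

/-- `Ψ(x) = x (|log x| ∨ 1)`. -/
def Psi (x : ℝ) : ℝ := x * max |Real.log x| 1

/-- Hilbert–Schmidt (Frobenius) norm of a matrix. -/
def hsNorm {d : ℕ} (M : Matrix (Fin d) (Fin d) ℝ) : ℝ :=
  Real.sqrt (∑ j, ∑ k, M j k ^ 2)

/-- Operator norm of a matrix, acting on Euclidean space. -/
def opNorm {d : ℕ} (M : Matrix (Fin d) (Fin d) ℝ) : ℝ :=
  ‖LinearMap.toContinuousLinearMap (Matrix.toEuclideanLin M)‖

/-- Multiplication of a Euclidean vector by a matrix. -/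
def mulVecE {d : ℕ} (M : Matrix (Fin d) (Fin d) ℝ) (x : EuclideanSpace ℝ (Fin d)) :
    EuclideanSpace ℝ (Fin d) :=
  (WithLp.equiv 2 (Fin d → ℝ)).symm (M.mulVec ((WithLp.equiv 2 (Fin d → ℝ)) x))

/-- Covariance matrix of a random vector. -/
def covMatrix {d : ℕ} {Ω : Type*} [MeasurableSpace Ω] (μ : Measure Ω)
    (Y : Ω → EuclideanSpace ℝ (Fin d)) : Matrix (Fin d) (Fin d) ℝ :=
  Matrix.of fun j k =>
    (∫ ω, Y ω j * Y ω k ∂μ) - (∫ ω, Y ω j ∂μ) * (∫ ω, Y ω k ∂μ)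

/-- The standard Gaussian distribution `N(0, I_d)` on `ℝ^d`. -/
def stdGaussian (d : ℕ) : Measure (EuclideanSpace ℝ (Fin d)) :=
  (Measure.pi fun _ : Fin d => gaussianReal 0 1).map
    (WithLp.equiv 2 (Fin d → ℝ)).symm

/-- The centered Gaussian distribution `N(0, S)` on `ℝ^d` for a positive semidefinite `S`,
realized as the pushforward of the standard Gaussian by the square root of `S`. -/
def gaussianOf {d : ℕ} {S : Matrix (Fin d) (Fin d) ℝ} (hS : S.PosSemidef) :
    Measure (EuclideanSpace ℝ (Fin d)) :=
  (stdGaussian d).map (mulVecE (hS.1.eigenvectorUnitary.1 *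
    diagonal ((↑) ∘ (√·) ∘ hS.1.eigenvalues) * (star hS.1.eigenvectorUnitary : Matrix (Fin d) (Fin d) ℝ)))

/-- The largest eigenvalue of a symmetric matrix. -/
def lambdaMax {d : ℕ} {A : Matrix (Fin d) (Fin d) ℝ} (hA : A.IsHermitian) : ℝ :=
  ⨆ i, hA.eigenvalues i

/-- `Λ₁(A) = √(∑_{j=1}^d λ_j(A)²)` for the eigenvalues `λ₁(A) ≥ ⋯ ≥ λ_d(A)`. -/
def Lambda1 {d : ℕ} {A : Matrix (Fin d) (Fin d) ℝ} (hA : A.IsHermitian) : ℝ :=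
  Real.sqrt (∑ i, hA.eigenvalues i ^ 2)

/-- `Λ₂(A) = √(∑_{j=2}^d λ_j(A)²)` for the eigenvalues `λ₁(A) ≥ ⋯ ≥ λ_d(A)`. -/
def Lambda2 {d : ℕ} {A : Matrix (Fin d) (Fin d) ℝ} (hA : A.IsHermitian) : ℝ :=
  Real.sqrt ((∑ i, hA.eigenvalues i ^ 2) - lambdaMax hA ^ 2)

/-- `κ(A) = (Λ₁(A) Λ₂(A))^{-1/2}`. -/
def kappa {d : ℕ} {A : Matrix (Fin d) (Fin d) ℝ} (hA : A.IsHermitian) : ℝ :=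
  (Lambda1 hA * Lambda2 hA) ^ (-(1 : ℝ) / 2)

/-!
Fix `i` and freeze `ξᵢ = x`. The summands `⟪x, ξᵤ⟫`, `u ≠ i`, are independent centred reals, so
Cauchy–Schwarz and the fourth-moment bound `E S⁴ ≤ 3 (E S²)² + ∑ᵤ E ⟪x, ξᵤ⟫⁴` give
`E |⟪x, W⁽ⁱ⁾⟫|³ ≤ √3 Q(x)^{3/2} + √(Q(x) |x|² h(x))`, where `Q(x) = xᵀ Σ_W x = ∑ᵤ E ⟪x, ξᵤ⟫²`
and `h(x) = ∑ᵤ E [⟪x, ξᵤ⟫² |ξᵤ|²]` is `weightedSecondMoment`. Since `Q(x) ≤ ‖Σ_W‖_{H.S.} |x|²`,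
AM–GM bounds the cross term by `(‖Σ_W‖_{H.S.} |x|⁴ + h(x)) / 2`. Independence of `ξᵢ` and `W⁽ⁱ⁾`
lets us integrate this bound against the law of `ξᵢ`, and by Fubini `∑ᵢ E h(ξᵢ) = ∑ᵤ E [Q(ξᵤ) |ξᵤ|²] ≤ ‖Σ_W‖_{H.S.} ∑ᵤ E |ξᵤ|⁴`.
-/

theorem sqrt_mul_sqrt_three_mul_sq_add_le {A B Q a b : ℝ} (hA : 0 ≤ A) (hAQ : A ≤ Q)
    (hB : 0 ≤ B) (hQB : Q * B ≤ a * b) (ha : 0 ≤ a) (hb : 0 ≤ b) :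
    √A * √(3 * A ^ 2 + B) ≤ √3 * (√Q * Q) + (a + b) / 2 := by
  have hsplit : √(3 * A ^ 2 + B) ≤ √3 * A + √B := by
    refine Real.sqrt_le_iff.2 ⟨by positivity, ?_⟩
    nlinarith [Real.sq_sqrt (show (0 : ℝ) ≤ 3 by norm_num), Real.sq_sqrt hB,
      mul_nonneg (mul_nonneg (Real.sqrt_nonneg 3) hA) (Real.sqrt_nonneg B)]
  have hAB : √A * √B ≤ (a + b) / 2 :=
    calc √A * √B = √(A * B) := (Real.sqrt_mul hA B).symm
      _ ≤ √(a * b) := Real.sqrt_le_sqrt ((mul_le_mul_of_nonneg_right hAQ hB).trans hQB)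
      _ ≤ (a + b) / 2 := by
        rw [Real.sqrt_mul ha]
        nlinarith [sq_nonneg (√a - √b), Real.sq_sqrt ha, Real.sq_sqrt hb]
  have hAA : √A * A ≤ √Q * Q := mul_le_mul (Real.sqrt_le_sqrt hAQ) hAQ hA (Real.sqrt_nonneg Q)
  calc √A * √(3 * A ^ 2 + B) ≤ √A * (√3 * A + √B) :=
        mul_le_mul_of_nonneg_left hsplit (Real.sqrt_nonneg A)
    _ = √3 * (√A * A) + √A * √B := by ring
    _ ≤ √3 * (√Q * Q) + (a + b) / 2 := by gcongr

theorem rpow_three_div_two_eq_sqrt_mul {a : ℝ} (ha : 0 ≤ a) : a ^ ((3 : ℝ) / 2) = √a * a := by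
  rw [show (3 : ℝ) / 2 = 1 / 2 + 1 by norm_num, Real.rpow_add' ha (by norm_num), Real.rpow_one,
    Real.sqrt_eq_rpow]

section RealMoments

variable {Ω : Type*} [MeasurableSpace Ω] {μ : Measure Ω}

theorem _root_.MeasureTheory.MemLp.integrable_pow_of_le [IsFiniteMeasure μ] {X : Ω → ℝ}
    {p k : ℕ} (hX : MemLp X p μ) (hk : k ≤ p) : Integrable (fun ω => X ω ^ k) μ := by
  have := (hX.mono_exponent (Nat.cast_le.2 hk)).integrable_norm_pow'
  exact (integrable_norm_iff (hX.1.pow k)).1 (by simpa only [Pi.pow_apply, norm_pow] using this)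

theorem _root_.ProbabilityTheory.IndepFun.integral_add_pow [IsFiniteMeasure μ]
    {S T : Ω → ℝ} (hST : IndepFun S T μ) {n : ℕ} (hS : MemLp S n μ) (hT : MemLp T n μ) :
    ∫ ω, (S ω + T ω) ^ n ∂μ =
      ∑ k ∈ Finset.range (n + 1), (∫ ω, S ω ^ k ∂μ) * (∫ ω, T ω ^ (n - k) ∂μ) * n.choose k := by
  have hpow (k : ℕ) : IndepFun (fun ω => S ω ^ k) (fun ω => T ω ^ (n - k)) μ :=
    hST.comp (measurable_id.pow_const k) (measurable_id.pow_const (n - k))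
  simp_rw [add_pow]
  rw [integral_finsetSum]
  · refine Finset.sum_congr rfl fun k _ => ?_
    rw [integral_mul_const, (hpow k).integral_fun_mul_eq_mul_integral
      (hS.1.pow k) (hT.1.pow (n - k))]
  · intro k hk
    have hk : k ≤ n := Nat.lt_succ_iff.1 (Finset.mem_range.1 hk)
    exact ((hpow k).integrable_mul (hS.integrable_pow_of_le hk)
      (hT.integrable_pow_of_le (Nat.sub_le n k))).mul_const _

theorem _root_.ProbabilityTheory.IndepFun.integral_add_pow_four [IsProbabilityMeasure μ]
    {S T : Ω → ℝ} (hST : IndepFun S T μ) (hS : MemLp S 4 μ) (hT : MemLp T 4 μ)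
    (hS0 : ∫ ω, S ω ∂μ = 0) (hT0 : ∫ ω, T ω ∂μ = 0) :
    ∫ ω, (S ω + T ω) ^ 4 ∂μ =
      ∫ ω, S ω ^ 4 ∂μ + 6 * (∫ ω, S ω ^ 2 ∂μ) * (∫ ω, T ω ^ 2 ∂μ) + ∫ ω, T ω ^ 4 ∂μ := by
  rw [hST.integral_add_pow (n := 4) hS hT]
  norm_num [Finset.sum_range_succ, Nat.choose, hS0, hT0]
  ring

theorem _root_.ProbabilityTheory.iIndepFun.integral_sum_sq {ι : Type*} [IsProbabilityMeasure μ]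
    {X : ι → Ω → ℝ} (hX : iIndepFun X μ) (hX2 : ∀ i, MemLp (X i) 2 μ)
    (hX0 : ∀ i, ∫ ω, X i ω ∂μ = 0) (s : Finset ι) :
    ∫ ω, (∑ i ∈ s, X i ω) ^ 2 ∂μ = ∑ i ∈ s, ∫ ω, X i ω ^ 2 ∂μ := by
  have hvar := IndepFun.variance_sum (s := s) (fun i _ => hX2 i)
    fun i _ j _ hij => hX.indepFun hij
  rw [Finset.sum_fn] at hvar
  rw [variance_of_integral_eq_zero, Finset.sum_congr rfl fun i _ =>
    variance_of_integral_eq_zero (hX2 i).aemeasurable (hX0 i)] at hvar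
  · simpa using hvar
  · exact (memLp_finsetSum s fun i _ => hX2 i).aemeasurable
  · rw [integral_finsetSum s fun i _ => (hX2 i).integrable one_le_two]
    simp [hX0]

theorem _root_.ProbabilityTheory.iIndepFun.integral_sum_pow_four_le {ι : Type*}
    [IsProbabilityMeasure μ] {X : ι → Ω → ℝ} (hX : iIndepFun X μ) (hXm : ∀ i, Measurable (X i))
    (hX4 : ∀ i, MemLp (X i) 4 μ) (hX0 : ∀ i, ∫ ω, X i ω ∂μ = 0) (s : Finset ι) :
    ∫ ω, (∑ i ∈ s, X i ω) ^ 4 ∂μ ≤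
      3 * (∑ i ∈ s, ∫ ω, X i ω ^ 2 ∂μ) ^ 2 + ∑ i ∈ s, ∫ ω, X i ω ^ 4 ∂μ := by
  classical
  have hX2 (i : ι) : MemLp (X i) 2 μ := (hX4 i).mono_exponent (by norm_num)
  induction s using Finset.induction_on with
  | empty => simp
  | insert j s hj ih =>
    have hind : IndepFun (X j) (fun ω => ∑ i ∈ s, X i ω) μ := by
      simpa only [Finset.sum_fn] using (hX.indepFun_finsetSum_of_notMem hXm hj).symm
    have hS0 : ∫ ω, ∑ i ∈ s, X i ω ∂μ = 0 := by
      rw [integral_finsetSum s fun i _ => (hX4 i).integrable (by norm_num)]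
      simp [hX0]
    have hj2 : 0 ≤ ∫ ω, X j ω ^ 2 ∂μ := integral_nonneg fun ω => sq_nonneg _
    have hs2 : 0 ≤ ∑ i ∈ s, ∫ ω, X i ω ^ 2 ∂μ :=
      Finset.sum_nonneg fun i _ => integral_nonneg fun ω => sq_nonneg _
    simp only [Finset.sum_insert hj]
    rw [hind.integral_add_pow_four (hX4 j) (memLp_finsetSum s fun i _ => hX4 i) (hX0 j) hS0,
      hX.integral_sum_sq hX2 hX0]
    nlinarith

theorem integral_abs_pow_three_le_sqrt_mul_sqrt [IsFiniteMeasure μ] {X : Ω → ℝ}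
    (hX : MemLp X 4 μ) :
    ∫ ω, |X ω| ^ 3 ∂μ ≤ √(∫ ω, X ω ^ 2 ∂μ) * √(∫ ω, X ω ^ 4 ∂μ) := by
  have hsq : MemLp (fun ω => X ω ^ 2) 2 μ :=
    (memLp_two_iff_integrable_sq (hX.1.pow 2)).2 <| by
      simpa only [Pi.pow_apply, ← pow_mul] using hX.integrable_pow_of_le (k := 4) (p := 4) le_rfl
  have h := integral_mul_le_Lp_mul_Lq_of_nonneg Real.HolderConjugate.two_two
    (ae_of_all μ fun ω => abs_nonneg (X ω)) (ae_of_all μ fun ω => sq_nonneg (X ω))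
    (by rw [ENNReal.ofReal_ofNat]; exact (hX.mono_exponent (by norm_num)).abs)
    (by rwa [ENNReal.ofReal_ofNat])
  simp only [Real.rpow_two, sq_abs, ← pow_mul, ← Real.sqrt_eq_rpow] at h
  have hcube (ω : Ω) : |X ω| ^ 3 = |X ω| * X ω ^ 2 := by rw [← sq_abs (X ω)]; ring
  simpa only [hcube] using h

end RealMoments

section Decoupling

variable {Ω : Type*} [MeasurableSpace Ω] {μ : Measure Ω}

theorem _root_.ProbabilityTheory.IndepFun.integral_le_of_forall_integral_le {α β : Type*}
    [MeasurableSpace α] [MeasurableSpace β] [IsFiniteMeasure μ] {X : Ω → α} {Y : Ω → β}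
    (hXY : IndepFun X Y μ) (hX : AEMeasurable X μ) (hY : AEMeasurable Y μ) {f : α → β → ℝ}
    (hf : Measurable (Function.uncurry f)) (hfi : Integrable (fun ω => f (X ω) (Y ω)) μ)
    {g : α → ℝ} (hg : Integrable (fun ω => g (X ω)) μ)
    (hfg : ∀ x, ∫ ω, f x (Y ω) ∂μ ≤ g x) :
    ∫ ω, f (X ω) (Y ω) ∂μ ≤ ∫ ω, g (X ω) ∂μ := by
  have hmap := (indepFun_iff_map_prod_eq_prod_map_map hX hY).1 hXY
  have hint : Integrable (Function.uncurry f) ((μ.map X).prod (μ.map Y)) := by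
    rw [← hmap]
    exact (integrable_map_measure hf.aestronglyMeasurable (hX.prodMk hY)).2 hfi
  have hslice (x : α) : ∫ y, f x y ∂(μ.map Y) = ∫ ω, f x (Y ω) ∂μ :=
    integral_map hY (hf.comp measurable_prodMk_left).aestronglyMeasurable
  have hmarg := hint.integral_prod_left
  calc ∫ ω, f (X ω) (Y ω) ∂μ = ∫ p, Function.uncurry f p ∂(μ.map fun ω => (X ω, Y ω)) :=
        (integral_map (hX.prodMk hY) hf.aestronglyMeasurable).symm
    _ = ∫ x, ∫ y, f x y ∂(μ.map Y) ∂(μ.map X) := by rw [hmap, integral_prod _ hint]; rfl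
    _ = ∫ ω, ∫ y, f (X ω) y ∂(μ.map Y) ∂μ := integral_map hX hmarg.aestronglyMeasurable
    _ ≤ ∫ ω, g (X ω) ∂μ := by
        refine integral_mono ((integrable_map_measure hmarg.aestronglyMeasurable hX).1 hmarg) hg
          fun ω => ?_
        simpa only [hslice] using hfg (X ω)

end Decoupling

section InnerProduct

variable {Ω : Type*} [MeasurableSpace Ω] {μ : Measure Ω}
  {E : Type*} [NormedAddCommGroup E] [InnerProductSpace ℝ E] {ι : Type*} [Fintype ι]

theorem sq_real_inner_le_norm_sq_mul_norm_sq (x y : E) : ⟪x, y⟫ ^ 2 ≤ ‖x‖ ^ 2 * ‖y‖ ^ 2 := by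
  rw [← mul_pow, ← sq_abs]
  exact pow_le_pow_left₀ (abs_nonneg _) (abs_real_inner_le_norm x y) 2

theorem sq_real_inner_mul_norm_sq_le (x y : E) : ⟪x, y⟫ ^ 2 * ‖y‖ ^ 2 ≤ ‖x‖ ^ 2 * ‖y‖ ^ 4 :=
  calc ⟪x, y⟫ ^ 2 * ‖y‖ ^ 2 ≤ ‖x‖ ^ 2 * ‖y‖ ^ 2 * ‖y‖ ^ 2 := by
        gcongr; exact sq_real_inner_le_norm_sq_mul_norm_sq x y
    _ = ‖x‖ ^ 2 * ‖y‖ ^ 4 := by ring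

theorem integrable_sq_real_inner_mul_norm_sq [IsFiniteMeasure μ] (x : E) {Y : Ω → E}
    (hY : MemLp Y 4 μ) : Integrable (fun ω => ⟪x, Y ω⟫ ^ 2 * ‖Y ω‖ ^ 2) μ := by
  refine (hY.integrable_norm_pow' (p := 4)).const_mul (‖x‖ ^ 2) |>.mono'
    ((hY.1.const_inner.pow 2).mul (hY.1.norm.pow 2)) (ae_of_all _ fun ω => ?_)
  rw [Real.norm_eq_abs, abs_of_nonneg (by positivity)]
  exact sq_real_inner_mul_norm_sq_le x (Y ω)

theorem integrable_prod_sq_real_inner_mul_norm_sq [IsFiniteMeasure μ] {X Y : Ω → E}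
    (hX : MemLp X 2 μ) (hY : MemLp Y 4 μ) :
    Integrable (fun p : Ω × Ω => ⟪X p.1, Y p.2⟫ ^ 2 * ‖Y p.2‖ ^ 2) (μ.prod μ) := by
  refine ((hX.integrable_norm_pow' (p := 2)).mul_prod (hY.integrable_norm_pow' (p := 4))).mono'
    (((hX.1.comp_fst.inner hY.1.comp_snd).pow 2).mul (hY.1.comp_snd.norm.pow 2))
    (ae_of_all _ fun p => ?_)
  rw [Real.norm_eq_abs, abs_of_nonneg (by positivity)]
  exact sq_real_inner_mul_norm_sq_le (X p.1) (Y p.2)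

def weightedSecondMoment (μ : Measure Ω) (ξ : ι → Ω → E) (x : E) : ℝ :=
  ∑ u, ∫ ω, ⟪x, ξ u ω⟫ ^ 2 * ‖ξ u ω‖ ^ 2 ∂μ

theorem weightedSecondMoment_nonneg (ξ : ι → Ω → E) (x : E) :
    0 ≤ weightedSecondMoment μ ξ x :=
  Finset.sum_nonneg fun _ _ => integral_nonneg fun _ => by positivity

theorem integrable_weightedSecondMoment_comp [IsFiniteMeasure μ] {ξ : ι → Ω → E}
    (hξ : ∀ i, MemLp (ξ i) 4 μ) (i : ι) :
    Integrable (fun ω => weightedSecondMoment μ ξ (ξ i ω)) μ :=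
  integrable_finsetSum _ fun u _ => (integrable_prod_sq_real_inner_mul_norm_sq
    ((hξ i).mono_exponent (by norm_num)) (hξ u)).integral_prod_left

theorem integral_real_inner_eq_zero [CompleteSpace E] {Y : Ω → E} (hY : Integrable Y μ)
    (hY0 : ∫ ω, Y ω ∂μ = 0) (x : E) : ∫ ω, ⟪x, Y ω⟫ ∂μ = 0 := by
  rw [integral_inner hY, hY0, inner_zero_right]

end InnerProduct

section Matrix

variable {Ω : Type*} [MeasurableSpace Ω] {μ : Measure Ω} {d : ℕ}

theorem _root_.EuclideanSpace.real_inner_eq_sum_mul {ι : Type*} [Fintype ι]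
    (x y : EuclideanSpace ℝ ι) : ⟪x, y⟫ = ∑ j, x j * y j := by
  simp only [PiLp.inner_apply, RCLike.inner_apply, conj_trivial, mul_comm]

theorem hsNorm_nonneg (M : Matrix (Fin d) (Fin d) ℝ) : 0 ≤ hsNorm M := Real.sqrt_nonneg _

theorem continuous_mulVecE (M : Matrix (Fin d) (Fin d) ℝ) : Continuous (mulVecE M) :=
  (Matrix.toEuclideanCLM (𝕜 := ℝ) M).continuous

theorem inner_mulVecE (M : Matrix (Fin d) (Fin d) ℝ) (x : EuclideanSpace ℝ (Fin d)) :
    ⟪x, mulVecE M x⟫ = ∑ j, ∑ k, x j * x k * M j k := by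
  simp only [EuclideanSpace.real_inner_eq_sum_mul, mulVecE, WithLp.equiv_symm_apply,
    WithLp.equiv_apply, Matrix.mulVec, dotProduct, Finset.mul_sum]
  exact Finset.sum_congr rfl fun j _ => Finset.sum_congr rfl fun k _ => by ring

theorem inner_mulVecE_le_hsNorm_mul_norm_sq (M : Matrix (Fin d) (Fin d) ℝ)
    (x : EuclideanSpace ℝ (Fin d)) : ⟪x, mulVecE M x⟫ ≤ hsNorm M * ‖x‖ ^ 2 := by
  have hx : ∑ j, ∑ k, (x j * x k) ^ 2 = (‖x‖ ^ 2) ^ 2 := by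
    rw [EuclideanSpace.real_norm_sq_eq, sq, Finset.sum_mul_sum]
    simp_rw [mul_pow]
  calc ⟪x, mulVecE M x⟫ = ∑ p : Fin d × Fin d, (x p.1 * x p.2) * M p.1 p.2 := by
        rw [inner_mulVecE]
        exact (Fintype.sum_prod_type' fun j k => x j * x k * M j k).symm
    _ ≤ √(∑ p : Fin d × Fin d, (x p.1 * x p.2) ^ 2) * √(∑ p : Fin d × Fin d, M p.1 p.2 ^ 2) :=
        Real.sum_mul_le_sqrt_mul_sqrt _ _ _
    _ = hsNorm M * ‖x‖ ^ 2 := by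
        rw [Fintype.sum_prod_type' fun j k => (x j * x k) ^ 2,
          Fintype.sum_prod_type' fun j k => M j k ^ 2, hx, Real.sqrt_sq (by positivity),
          hsNorm, mul_comm]

theorem integrable_sqrt_inner_mulVecE_mul [IsFiniteMeasure μ] {Y : Ω → EuclideanSpace ℝ (Fin d)}
    (hY : MemLp Y 3 μ) (M : Matrix (Fin d) (Fin d) ℝ) (hM : ∀ x, 0 ≤ ⟪x, mulVecE M x⟫) :
    Integrable (fun ω => √⟪Y ω, mulVecE M (Y ω)⟫ * ⟪Y ω, mulVecE M (Y ω)⟫) μ := by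
  have hQ : Continuous fun x => ⟪x, mulVecE M x⟫ := continuous_id.inner (continuous_mulVecE M)
  refine (hY.integrable_norm_pow' (p := 3)).const_mul (√(hsNorm M) * hsNorm M) |>.mono'
    ((hQ.sqrt.mul hQ).comp_aestronglyMeasurable hY.1) (ae_of_all _ fun ω => ?_)
  have hle := inner_mulVecE_le_hsNorm_mul_norm_sq M (Y ω)
  rw [Real.norm_eq_abs, abs_of_nonneg (mul_nonneg (Real.sqrt_nonneg _) (hM _))]
  calc √⟪Y ω, mulVecE M (Y ω)⟫ * ⟪Y ω, mulVecE M (Y ω)⟫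
      ≤ √(hsNorm M * ‖Y ω‖ ^ 2) * (hsNorm M * ‖Y ω‖ ^ 2) := by gcongr; exact hM _
    _ = √(hsNorm M) * hsNorm M * ‖Y ω‖ ^ 3 := by
        rw [Real.sqrt_mul (hsNorm_nonneg M), Real.sqrt_sq (norm_nonneg _)]
        ring

theorem inner_mulVecE_covMatrix [IsProbabilityMeasure μ] {Y : Ω → EuclideanSpace ℝ (Fin d)}
    (hY : MemLp Y 2 μ) (x : EuclideanSpace ℝ (Fin d)) :
    ⟪x, mulVecE (covMatrix μ Y) x⟫ = Var[fun ω => ⟪x, Y ω⟫; μ] := by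
  have hYj (j : Fin d) : MemLp (fun ω => Y ω j) 2 μ :=
    (EuclideanSpace.proj (𝕜 := ℝ) j).comp_memLp' hY
  have hxY : (fun ω => ⟪x, Y ω⟫) = fun ω => ∑ j, x j * Y ω j :=
    funext fun ω => EuclideanSpace.real_inner_eq_sum_mul _ _
  rw [← covariance_self (hY.const_inner x).aemeasurable, hxY,
    covariance_fun_sum_fun_sum (fun j => (hYj j).const_mul _) (fun j => (hYj j).const_mul _),
    inner_mulVecE]
  refine Finset.sum_congr rfl fun j _ => Finset.sum_congr rfl fun k _ => ?_
  rw [covariance_const_mul_left, covariance_const_mul_right, covariance_eq_sub (hYj j) (hYj k)]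
  simp only [covMatrix, Matrix.of_apply, Pi.mul_apply]
  ring

theorem inner_mulVecE_covMatrix_nonneg [IsProbabilityMeasure μ]
    {Y : Ω → EuclideanSpace ℝ (Fin d)} (hY : MemLp Y 2 μ) (x : EuclideanSpace ℝ (Fin d)) :
    0 ≤ ⟪x, mulVecE (covMatrix μ Y) x⟫ :=
  (inner_mulVecE_covMatrix hY x).symm ▸ variance_nonneg _ _

end Matrix

section IndependentSum

variable {Ω : Type*} [MeasurableSpace Ω] {μ : Measure Ω} [IsProbabilityMeasure μ] {d : ℕ}
  {ι : Type*} [Fintype ι] {ξ : ι → Ω → EuclideanSpace ℝ (Fin d)}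

theorem inner_mulVecE_covMatrix_sum (hindep : iIndepFun ξ μ) (hξ : ∀ i, MemLp (ξ i) 2 μ)
    (hmean : ∀ i, ∫ ω, ξ i ω ∂μ = 0) (x : EuclideanSpace ℝ (Fin d)) :
    ⟪x, mulVecE (covMatrix μ fun ω => ∑ u, ξ u ω) x⟫ = ∑ u, ∫ ω, ⟪x, ξ u ω⟫ ^ 2 ∂μ := by
  have hT : iIndepFun (fun u ω => ⟪x, ξ u ω⟫) μ :=
    hindep.comp _ fun _ => (continuous_const.inner continuous_id).measurable
  have hT2 (u : ι) : MemLp (fun ω => ⟪x, ξ u ω⟫) 2 μ := (hξ u).const_inner x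
  have hT0 (u : ι) : ∫ ω, ⟪x, ξ u ω⟫ ∂μ = 0 :=
    integral_real_inner_eq_zero ((hξ u).integrable one_le_two) (hmean u) x
  have hS0 : ∫ ω, ∑ u, ⟪x, ξ u ω⟫ ∂μ = 0 := by
    rw [integral_finsetSum _ fun u _ => (hT2 u).integrable one_le_two]
    simp [hT0]
  rw [inner_mulVecE_covMatrix (memLp_finsetSum _ fun u _ => hξ u)]
  simp_rw [inner_sum]
  rw [variance_of_integral_eq_zero (memLp_finsetSum _ fun u _ => hT2 u).aemeasurable hS0,
    hT.integral_sum_sq hT2 hT0]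

theorem integral_abs_inner_sum_pow_three_le (hmeas : ∀ i, Measurable (ξ i))
    (hindep : iIndepFun ξ μ) (hξ : ∀ i, MemLp (ξ i) 4 μ) (hmean : ∀ i, ∫ ω, ξ i ω ∂μ = 0)
    (s : Finset ι) (x : EuclideanSpace ℝ (Fin d)) :
    ∫ ω, |⟪x, ∑ u ∈ s, ξ u ω⟫| ^ 3 ∂μ ≤
      √3 * (√⟪x, mulVecE (covMatrix μ fun ω => ∑ u, ξ u ω) x⟫ *
          ⟪x, mulVecE (covMatrix μ fun ω => ∑ u, ξ u ω) x⟫) +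
        (hsNorm (covMatrix μ fun ω => ∑ u, ξ u ω) * ‖x‖ ^ 4 + weightedSecondMoment μ ξ x) / 2 := by
  set C := covMatrix μ fun ω => ∑ u, ξ u ω
  set T : ι → Ω → ℝ := fun u ω => ⟪x, ξ u ω⟫
  have hinner : Measurable fun y : EuclideanSpace ℝ (Fin d) => ⟪x, y⟫ :=
    (continuous_const.inner continuous_id).measurable
  have hTm (u : ι) : Measurable (T u) := hinner.comp (hmeas u)
  have hTi : iIndepFun T μ := hindep.comp _ fun _ => hinner
  have hT4 (u : ι) : MemLp (T u) 4 μ := (hξ u).const_inner x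
  have hT2 (u : ι) : MemLp (T u) 2 μ := (hT4 u).mono_exponent (by norm_num)
  have hT0 (u : ι) : ∫ ω, T u ω ∂μ = 0 :=
    integral_real_inner_eq_zero ((hξ u).integrable (by norm_num)) (hmean u) x
  set A := ∑ u ∈ s, ∫ ω, T u ω ^ 2 ∂μ
  set B := ∑ u ∈ s, ∫ ω, T u ω ^ 4 ∂μ
  have hA : A ≤ ⟪x, mulVecE C x⟫ := by
    rw [inner_mulVecE_covMatrix_sum hindep (fun u => (hξ u).mono_exponent (by norm_num)) hmean]
    exact Finset.sum_le_univ_sum_of_nonneg fun u => integral_nonneg fun ω => sq_nonneg _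
  have hB : B ≤ ‖x‖ ^ 2 * weightedSecondMoment μ ξ x := by
    rw [weightedSecondMoment, Finset.mul_sum]
    refine (Finset.sum_le_univ_sum_of_nonneg fun u => integral_nonneg fun ω => by positivity).trans
      (Finset.sum_le_sum fun u _ => ?_)
    rw [← integral_const_mul]
    refine integral_mono_of_nonneg (ae_of_all _ fun ω => by positivity)
      ((integrable_sq_real_inner_mul_norm_sq x (hξ u)).const_mul _) (ae_of_all _ fun ω => ?_)
    calc T u ω ^ 4 = ⟪x, ξ u ω⟫ ^ 2 * ⟪x, ξ u ω⟫ ^ 2 := by ring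
      _ ≤ ⟪x, ξ u ω⟫ ^ 2 * (‖x‖ ^ 2 * ‖ξ u ω‖ ^ 2) := by
        gcongr; exact sq_real_inner_le_norm_sq_mul_norm_sq x (ξ u ω)
      _ = ‖x‖ ^ 2 * (⟪x, ξ u ω⟫ ^ 2 * ‖ξ u ω‖ ^ 2) := by ring
  have hQB : ⟪x, mulVecE C x⟫ * B ≤ (hsNorm C * ‖x‖ ^ 4) * weightedSecondMoment μ ξ x :=
    calc ⟪x, mulVecE C x⟫ * B ≤ (hsNorm C * ‖x‖ ^ 2) * (‖x‖ ^ 2 * weightedSecondMoment μ ξ x) :=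
          mul_le_mul (inner_mulVecE_le_hsNorm_mul_norm_sq C x) hB
            (Finset.sum_nonneg fun u _ => integral_nonneg fun ω => by positivity)
            (mul_nonneg (hsNorm_nonneg C) (by positivity))
      _ = (hsNorm C * ‖x‖ ^ 4) * weightedSecondMoment μ ξ x := by ring
  calc ∫ ω, |⟪x, ∑ u ∈ s, ξ u ω⟫| ^ 3 ∂μ = ∫ ω, |∑ u ∈ s, T u ω| ^ 3 ∂μ := by
        simp_rw [T, inner_sum]
    _ ≤ √(∫ ω, (∑ u ∈ s, T u ω) ^ 2 ∂μ) * √(∫ ω, (∑ u ∈ s, T u ω) ^ 4 ∂μ) :=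
        integral_abs_pow_three_le_sqrt_mul_sqrt (memLp_finsetSum s fun u _ => hT4 u)
    _ ≤ √A * √(3 * A ^ 2 + B) := by
        rw [hTi.integral_sum_sq hT2 hT0]
        gcongr
        exact hTi.integral_sum_pow_four_le hTm hT4 hT0 s
    _ ≤ _ := sqrt_mul_sqrt_three_mul_sq_add_le
        (Finset.sum_nonneg fun u _ => integral_nonneg fun ω => sq_nonneg _) hA
        (Finset.sum_nonneg fun u _ => integral_nonneg fun ω => by positivity) hQB
        (mul_nonneg (hsNorm_nonneg C) (by positivity)) (weightedSecondMoment_nonneg ξ x)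

theorem sum_integral_weightedSecondMoment_le (hindep : iIndepFun ξ μ)
    (hξ : ∀ i, MemLp (ξ i) 4 μ) (hmean : ∀ i, ∫ ω, ξ i ω ∂μ = 0) :
    ∑ i, ∫ ω, weightedSecondMoment μ ξ (ξ i ω) ∂μ ≤
      hsNorm (covMatrix μ fun ω => ∑ u, ξ u ω) * ∑ u, ∫ ω, ‖ξ u ω‖ ^ 4 ∂μ := by
  set C := covMatrix μ fun ω => ∑ u, ξ u ω
  have hξ2 (i : ι) : MemLp (ξ i) 2 μ := (hξ i).mono_exponent (by norm_num)
  have hF (i u : ι) := integrable_prod_sq_real_inner_mul_norm_sq (hξ2 i) (hξ u)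
  have hswap : ∑ i, ∫ ω, weightedSecondMoment μ ξ (ξ i ω) ∂μ =
      ∑ u, ∫ ω', ⟪ξ u ω', mulVecE C (ξ u ω')⟫ * ‖ξ u ω'‖ ^ 2 ∂μ :=
    calc ∑ i, ∫ ω, weightedSecondMoment μ ξ (ξ i ω) ∂μ
        = ∑ i, ∑ u, ∫ ω, ∫ ω', ⟪ξ i ω, ξ u ω'⟫ ^ 2 * ‖ξ u ω'‖ ^ 2 ∂μ ∂μ :=
          Finset.sum_congr rfl fun i _ =>
            integral_finsetSum _ fun u _ => (hF i u).integral_prod_left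
      _ = ∑ u, ∑ i, ∫ ω', ∫ ω, ⟪ξ i ω, ξ u ω'⟫ ^ 2 * ‖ξ u ω'‖ ^ 2 ∂μ ∂μ := by
          rw [Finset.sum_comm]
          exact Finset.sum_congr rfl fun u _ => Finset.sum_congr rfl fun i _ =>
            integral_integral_swap (hF i u)
      _ = ∑ u, ∫ ω', ∑ i, ∫ ω, ⟪ξ i ω, ξ u ω'⟫ ^ 2 * ‖ξ u ω'‖ ^ 2 ∂μ ∂μ :=
          Finset.sum_congr rfl fun u _ =>
            (integral_finsetSum _ fun i _ => (hF i u).integral_prod_right).symm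
      _ = ∑ u, ∫ ω', ⟪ξ u ω', mulVecE C (ξ u ω')⟫ * ‖ξ u ω'‖ ^ 2 ∂μ := by
          refine Finset.sum_congr rfl fun u _ => integral_congr_ae (ae_of_all _ fun ω' => ?_)
          simp_rw [integral_mul_const, ← Finset.sum_mul, real_inner_comm (ξ u ω')]
          exact congrArg (· * _) (inner_mulVecE_covMatrix_sum hindep hξ2 hmean _).symm
  rw [hswap, Finset.mul_sum]
  gcongr with u
  rw [← integral_const_mul]
  refine integral_mono_of_nonneg (ae_of_all _ fun ω => ?_)
    (((hξ u).integrable_norm_pow' (p := 4)).const_mul _) (ae_of_all _ fun ω => ?_)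
  · exact mul_nonneg (inner_mulVecE_covMatrix_nonneg (memLp_finsetSum _ fun u _ => hξ2 u) _)
      (by positivity)
  · calc ⟪ξ u ω, mulVecE C (ξ u ω)⟫ * ‖ξ u ω‖ ^ 2 ≤ hsNorm C * ‖ξ u ω‖ ^ 2 * ‖ξ u ω‖ ^ 2 := by
          gcongr; exact inner_mulVecE_le_hsNorm_mul_norm_sq C _
      _ = hsNorm C * ‖ξ u ω‖ ^ 4 := by ring

theorem integral_abs_inner_sum_erase_pow_three_le [DecidableEq ι] (hmeas : ∀ i, Measurable (ξ i))
    (hindep : iIndepFun ξ μ) (hξ : ∀ i, MemLp (ξ i) 4 μ) (hmean : ∀ i, ∫ ω, ξ i ω ∂μ = 0)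
    (i : ι) :
    ∫ ω, |⟪ξ i ω, ∑ u ∈ Finset.univ.erase i, ξ u ω⟫| ^ 3 ∂μ ≤
      √3 * ∫ ω, √⟪ξ i ω, mulVecE (covMatrix μ fun ω => ∑ u, ξ u ω) (ξ i ω)⟫ *
          ⟪ξ i ω, mulVecE (covMatrix μ fun ω => ∑ u, ξ u ω) (ξ i ω)⟫ ∂μ +
        (hsNorm (covMatrix μ fun ω => ∑ u, ξ u ω) * ∫ ω, ‖ξ i ω‖ ^ 4 ∂μ +
          ∫ ω, weightedSecondMoment μ ξ (ξ i ω) ∂μ) / 2 := by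
  set C := covMatrix μ fun ω => ∑ u, ξ u ω
  set W := fun ω => ∑ u ∈ Finset.univ.erase i, ξ u ω
  have hξ3 (u : ι) : MemLp (ξ u) 3 μ := (hξ u).mono_exponent (by norm_num)
  have hWm : Measurable W := Finset.measurable_sum _ fun u _ => hmeas u
  have hind : IndepFun (ξ i) W μ := by
    simpa only [Finset.sum_fn] using
      (hindep.indepFun_finsetSum_of_notMem hmeas (Finset.notMem_erase i _)).symm
  have hφ := integrable_sqrt_inner_mulVecE_mul (hξ3 i) C <| inner_mulVecE_covMatrix_nonneg <|
    memLp_finsetSum _ fun u _ => (hξ u).mono_exponent (by norm_num)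
  have h4 := (hξ i).integrable_norm_pow' (p := 4)
  have hw := integrable_weightedSecondMoment_comp hξ i
  have hψ : Integrable
      (fun ω => (hsNorm C * ‖ξ i ω‖ ^ 4 + weightedSecondMoment μ ξ (ξ i ω)) / 2) μ :=
    ((h4.const_mul _).add hw).div_const 2
  have hfi : Integrable (fun ω => |⟪ξ i ω, W ω⟫| ^ 3) μ := by
    have hW3 : MemLp W 3 μ := memLp_finsetSum _ fun u _ => hξ3 u
    have hprod : Integrable (fun ω => ‖ξ i ω‖ ^ 3 * ‖W ω‖ ^ 3) μ :=
      (hind.comp (measurable_norm.pow_const 3) (measurable_norm.pow_const 3)).integrable_mul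
        ((hξ3 i).integrable_norm_pow' (p := 3)) (hW3.integrable_norm_pow' (p := 3))
    have hm : AEStronglyMeasurable (fun ω => |⟪ξ i ω, W ω⟫| ^ 3) μ :=
      (((hmeas i).inner hWm).abs.pow_const 3).aestronglyMeasurable
    refine hprod.mono' hm (ae_of_all _ fun ω => ?_)
    rw [Real.norm_eq_abs, abs_pow, abs_abs, ← mul_pow]
    exact pow_le_pow_left₀ (abs_nonneg _) (abs_real_inner_le_norm _ _) 3
  have hdec := hind.integral_le_of_forall_integral_le (hmeas i).aemeasurable hWm.aemeasurable
    (f := fun x y => |⟪x, y⟫| ^ 3) (continuous_inner.abs.pow 3).measurable hfi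
    (g := fun x => √3 * (√⟪x, mulVecE C x⟫ * ⟪x, mulVecE C x⟫) +
      (hsNorm C * ‖x‖ ^ 4 + weightedSecondMoment μ ξ x) / 2)
    ((hφ.const_mul √3).add hψ)
    fun x => integral_abs_inner_sum_pow_three_le hmeas hindep hξ hmean _ x
  refine hdec.trans_eq ?_
  rw [integral_add (hφ.const_mul √3) hψ, integral_const_mul, integral_div,
    integral_add (h4.const_mul (hsNorm C)) hw, integral_const_mul]

end IndependentSum

/-- third-moment bound for `∑ᵢ E|ξᵢ · W^{(i)}|³` from the proof of
Theorem `BALL2`, where `W^{(i)} = W - ξᵢ`. -/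
theorem third_moment_inner_bound
    {d n : ℕ} {Ω : Type} [MeasurableSpace Ω] (μ : Measure Ω) [IsProbabilityMeasure μ]
    (ξ : Fin n → Ω → EuclideanSpace ℝ (Fin d))
    (hmeas : ∀ i, Measurable (ξ i))
    (hindep : iIndepFun ξ μ)
    (hmean : ∀ i, ∫ ω, ξ i ω ∂μ = 0)
    (hmom : ∀ i, Integrable (fun ω => ‖ξ i ω‖ ^ 4) μ) :
    ∑ i, ∫ ω, |⟪ξ i ω, (∑ u, ξ u ω) - ξ i ω⟫| ^ 3 ∂μ ≤
      hsNorm (covMatrix μ (fun ω => ∑ u, ξ u ω)) * (∑ i, ∫ ω, ‖ξ i ω‖ ^ 4 ∂μ) +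
        Real.sqrt 3 * ∑ i, ∫ ω,
          ⟪ξ i ω, mulVecE (covMatrix μ (fun ω' => ∑ u, ξ u ω')) (ξ i ω)⟫ ^ ((3 : ℝ) / 2) ∂μ := by
  have hξ (i : Fin n) : MemLp (ξ i) 4 μ :=
    (integrable_norm_rpow_iff (hmeas i).aestronglyMeasurable (by norm_num) (by norm_num)).1
      (by simpa using hmom i)
  set C := covMatrix μ fun ω => ∑ u, ξ u ω
  have hC (x : EuclideanSpace ℝ (Fin d)) : 0 ≤ ⟪x, mulVecE C x⟫ :=
    inner_mulVecE_covMatrix_nonneg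
      (memLp_finsetSum _ fun u _ => (hξ u).mono_exponent (by norm_num)) x
  have hW (i : Fin n) (ω : Ω) : (∑ u, ξ u ω) - ξ i ω = ∑ u ∈ Finset.univ.erase i, ξ u ω := by
    rw [Finset.sum_erase_eq_sub (Finset.mem_univ i)]
  calc ∑ i, ∫ ω, |⟪ξ i ω, (∑ u, ξ u ω) - ξ i ω⟫| ^ 3 ∂μ
      ≤ ∑ i, (√3 * ∫ ω, √⟪ξ i ω, mulVecE C (ξ i ω)⟫ * ⟪ξ i ω, mulVecE C (ξ i ω)⟫ ∂μ +
          (hsNorm C * ∫ ω, ‖ξ i ω‖ ^ 4 ∂μ + ∫ ω, weightedSecondMoment μ ξ (ξ i ω) ∂μ) / 2) := by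
        simp_rw [hW]
        exact Finset.sum_le_sum fun i _ =>
          integral_abs_inner_sum_erase_pow_three_le hmeas hindep hξ hmean i
    _ ≤ √3 * ∑ i, ∫ ω, √⟪ξ i ω, mulVecE C (ξ i ω)⟫ * ⟪ξ i ω, mulVecE C (ξ i ω)⟫ ∂μ +
          (hsNorm C * ∑ i, ∫ ω, ‖ξ i ω‖ ^ 4 ∂μ + hsNorm C * ∑ i, ∫ ω, ‖ξ i ω‖ ^ 4 ∂μ) / 2 := by
        rw [Finset.sum_add_distrib, ← Finset.sum_div, Finset.sum_add_distrib, ← Finset.mul_sum,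
          ← Finset.mul_sum]
        gcongr
        exact sum_integral_weightedSecondMoment_le hindep hξ hmean
    _ = _ := by
        simp_rw [rpow_three_div_two_eq_sqrt_mul (hC _)]
        ring

end Paper
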